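/- Let S and A be finite nonempty sets, let p (true dynamics) and p̂ (learned model) be dynamics kernels, let π_D and π be policies, ρ0 an initial state distribution, r a reward bounded by r_max ≥ 0, γ ∈ (0,1), and k ∈ ℕ. Suppose (i) for every timestep t, the expectation over (s,a) drawn from the time-t state-action marginal of π_D under p of TV(p(·|s,a), p̂(·|s,a)) is at most ε_m, and (ii) max_s TV(π_D(·|s), π(·|s)) ≤ ε_π. Let η^branch[π] denote the return of the k-branched process that runs policy π under the model p̂ for the first k timesteps and policy π_D under the true dynamics p thereafter. Then η[π] ≥ η^branch[π] − 2·r_max·[ γ^{k+1}·ε_π/(1−γ)² + (γ^k + 2)·ε_π/(1−γ) + k·(ε_m + 2ε_π)/(1−γ) ], where η[π] is the return of π under p. -/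

import Mathlib

open scoped BigOperators

/-- Total variation distance between two probability mass functions on a finite type. -/
noncomputable def tv {X : Type*} [Fintype X] (q1 q2 : PMF X) : ℝ :=
  (1 / 2) * ∑ x, |(q1 x).toReal - (q2 x).toReal|

/-- Total variation distance between two real-valued distributions on a finite type. -/
noncomputable def tvFun {X : Type*} [Fintype X] (d1 d2 : X → ℝ) : ℝ :=
  (1 / 2) * ∑ x, |d1 x - d2 x|

/-- Time-`t` state-action marginal of a (possibly time-varying) policy/dynamics pair,
started from initial state distribution `ρ0`:  `d⁰(s,a) = ρ0(s)·π₀(a|s)` and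
`d^{t+1}(s,a) = Σ_{s',a'} d^t(s',a')·p_t(s|s',a')·π_{t+1}(a|s)`. -/
noncomputable def marginal {S A : Type*} [Fintype S] [Fintype A]
    (ρ0 : PMF S) (πseq : ℕ → S → PMF A) (pseq : ℕ → S × A → PMF S) :
    ℕ → S × A → ℝ
  | 0 => fun sa => (ρ0 sa.1).toReal * ((πseq 0 sa.1) sa.2).toReal
  | t + 1 => fun sa =>
      ∑ s' : S, ∑ a' : A,
        marginal ρ0 πseq pseq t (s', a') * ((pseq t (s', a')) sa.1).toReal *
          ((πseq (t + 1) sa.1) sa.2).toReal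

/-- Discounted return `η = Σ_t γ^t Σ_{s,a} d^t(s,a)·r(s,a)`. -/
noncomputable def ret {S A : Type*} [Fintype S] [Fintype A]
    (γ : ℝ) (r : S × A → ℝ) (d : ℕ → S × A → ℝ) : ℝ :=
  ∑' t : ℕ, γ ^ t * ∑ sa : S × A, d t sa * r sa


/-!
The return gap is at most `2 rmax Σ_t γ^t TV(d_t^branch, d_t^π)`. By the simulation argument,
the state-action marginals of two processes drift apart in each step by at most the expected
model error plus the policy error. Up to the branching time `k`, both the branched process and
`π` are compared with the data-collecting process `π_D` under `p`, which keeps their distance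
below `2 ε_π + k (ε_m + 2 ε_π)`; after it both run the true dynamics, so the distance grows by
at most `ε_π` per step. Summing against `γ^t` gives the bound, with `γ^k ε_π / (1 - γ)` to spare.
-/

open Finset

theorem PMF.sum_toReal_eq_one {X : Type*} [Fintype X] (q : PMF X) : ∑ x, (q x).toReal = 1 := by
  rw [← ENNReal.toReal_sum fun x _ => q.apply_ne_top x, ← tsum_fintype (L := .unconditional _),
    q.tsum_coe, ENNReal.toReal_one]

section Distance

variable {X : Type*} [Fintype X]

theorem tv_nonneg (q1 q2 : PMF X) : 0 ≤ tv q1 q2 := by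
  unfold tv
  positivity

theorem tv_self (q : PMF X) : tv q q = 0 := by
  simp [tv]

theorem sum_abs_sub_toReal_eq_two_mul_tv (q1 q2 : PMF X) :
    ∑ x, |(q1 x).toReal - (q2 x).toReal| = 2 * tv q1 q2 := by
  unfold tv
  ring

theorem tvFun_comm (d1 d2 : X → ℝ) : tvFun d1 d2 = tvFun d2 d1 := by
  simp only [tvFun, abs_sub_comm]

theorem tvFun_triangle (d1 d2 d3 : X → ℝ) : tvFun d1 d3 ≤ tvFun d1 d2 + tvFun d2 d3 := by
  unfold tvFun
  rw [← mul_add, ← sum_add_distrib]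
  gcongr with x
  exact abs_sub_le _ _ _

theorem sum_mul_le_of_le {d f : X → ℝ} {c : ℝ} (hd0 : ∀ x, 0 ≤ d x) (hd1 : ∑ x, d x = 1)
    (hf : ∀ x, f x ≤ c) : ∑ x, d x * f x ≤ c :=
  calc ∑ x, d x * f x ≤ ∑ x, d x * c :=
        sum_le_sum fun x _ => mul_le_mul_of_nonneg_left (hf x) (hd0 x)
    _ = c := by rw [← sum_mul, hd1, one_mul]

theorem abs_sum_mul_sub_sum_mul_le {r : X → ℝ} {rmax : ℝ} (hr : ∀ x, |r x| ≤ rmax)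
    (d1 d2 : X → ℝ) : |∑ x, d1 x * r x - ∑ x, d2 x * r x| ≤ 2 * rmax * tvFun d1 d2 :=
  calc |∑ x, d1 x * r x - ∑ x, d2 x * r x| = |∑ x, (d1 x - d2 x) * r x| := by
        simp only [sub_mul, sum_sub_distrib]
    _ ≤ ∑ x, |d1 x - d2 x| * rmax := by
        refine (abs_sum_le_sum_abs _ _).trans (sum_le_sum fun x _ => ?_)
        rw [abs_mul]
        exact mul_le_mul_of_nonneg_left (hr x) (abs_nonneg _)
    _ = 2 * rmax * tvFun d1 d2 := by
        rw [tvFun, ← sum_mul]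
        ring

end Distance

section Kernel

variable {X Y : Type*}

def pushKernel [Fintype X] (d : X → ℝ) (κ : X → PMF Y) : Y → ℝ :=
  fun y => ∑ x, d x * (κ x y).toReal

def compProd (μ : X → ℝ) (κ : X → PMF Y) : X × Y → ℝ :=
  fun xy => μ xy.1 * (κ xy.1 xy.2).toReal

theorem pushKernel_nonneg [Fintype X] {d : X → ℝ} (hd : ∀ x, 0 ≤ d x) (κ : X → PMF Y) (y : Y) :
    0 ≤ pushKernel d κ y :=
  sum_nonneg fun x _ => mul_nonneg (hd x) ENNReal.toReal_nonneg

theorem sum_pushKernel [Fintype X] [Fintype Y] (d : X → ℝ) (κ : X → PMF Y) :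
    ∑ y, pushKernel d κ y = ∑ x, d x := by
  simp only [pushKernel]
  rw [sum_comm]
  simp only [← mul_sum, PMF.sum_toReal_eq_one, mul_one]

theorem tvFun_pushKernel_le [Fintype X] [Fintype Y] (d e : X → ℝ) (κ : X → PMF Y) :
    tvFun (pushKernel d κ) (pushKernel e κ) ≤ tvFun d e := by
  unfold tvFun
  gcongr
  calc ∑ y, |pushKernel d κ y - pushKernel e κ y|
      = ∑ y, |∑ x, (d x - e x) * (κ x y).toReal| := by
        simp only [pushKernel, sub_mul, sum_sub_distrib]
    _ ≤ ∑ y, pushKernel (fun x => |d x - e x|) κ y := by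
        refine sum_le_sum fun y _ =>
          (abs_sum_le_sum_abs _ _).trans_eq (sum_congr rfl fun x _ => ?_)
        rw [abs_mul, abs_of_nonneg ENNReal.toReal_nonneg]
    _ = ∑ x, |d x - e x| := sum_pushKernel _ _

theorem tvFun_pushKernel_kernel_le [Fintype X] [Fintype Y] {d : X → ℝ} (hd : ∀ x, 0 ≤ d x)
    (κ1 κ2 : X → PMF Y) :
    tvFun (pushKernel d κ1) (pushKernel d κ2) ≤ ∑ x, d x * tv (κ1 x) (κ2 x) := by
  calc tvFun (pushKernel d κ1) (pushKernel d κ2)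
      = 1 / 2 * ∑ y, |∑ x, d x * ((κ1 x y).toReal - (κ2 x y).toReal)| := by
        simp only [tvFun, pushKernel, mul_sub, sum_sub_distrib]
    _ ≤ 1 / 2 * ∑ y, ∑ x, d x * |(κ1 x y).toReal - (κ2 x y).toReal| := by
        gcongr with y
        refine (abs_sum_le_sum_abs _ _).trans_eq (sum_congr rfl fun x _ => ?_)
        rw [abs_mul, abs_of_nonneg (hd x)]
    _ = ∑ x, d x * tv (κ1 x) (κ2 x) := by
        rw [sum_comm]
        simp only [← mul_sum, sum_abs_sub_toReal_eq_two_mul_tv]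
        rw [mul_sum]
        exact sum_congr rfl fun x _ => by ring

theorem compProd_nonneg {μ : X → ℝ} (hμ : ∀ x, 0 ≤ μ x) (κ : X → PMF Y) (xy : X × Y) :
    0 ≤ compProd μ κ xy :=
  mul_nonneg (hμ xy.1) ENNReal.toReal_nonneg

theorem sum_compProd [Fintype X] [Fintype Y] (μ : X → ℝ) (κ : X → PMF Y) :
    ∑ xy, compProd μ κ xy = ∑ x, μ x := by
  simp only [compProd, Fintype.sum_prod_type, ← mul_sum, PMF.sum_toReal_eq_one, mul_one]

theorem tvFun_compProd [Fintype X] [Fintype Y] (μ ν : X → ℝ) (κ : X → PMF Y) :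
    tvFun (compProd μ κ) (compProd ν κ) = tvFun μ ν := by
  simp only [tvFun]
  rw [← sum_compProd (fun x => |μ x - ν x|) κ]
  congr 1
  refine sum_congr rfl fun xy _ => ?_
  rw [compProd, compProd, compProd, ← sub_mul, abs_mul, abs_of_nonneg ENNReal.toReal_nonneg]

theorem tvFun_compProd_kernel [Fintype X] [Fintype Y] {μ : X → ℝ} (hμ : ∀ x, 0 ≤ μ x)
    (κ1 κ2 : X → PMF Y) :
    tvFun (compProd μ κ1) (compProd μ κ2) = ∑ x, μ x * tv (κ1 x) (κ2 x) := by
  simp only [tvFun, compProd, Fintype.sum_prod_type, ← mul_sub, abs_mul, abs_of_nonneg (hμ _)]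
  simp only [← mul_sum, sum_abs_sub_toReal_eq_two_mul_tv]
  rw [mul_sum]
  exact sum_congr rfl fun x _ => by ring

end Kernel

section Marginal

variable {S A : Type*} [Fintype S] [Fintype A] (ρ0 : PMF S)

theorem marginal_zero (πs : ℕ → S → PMF A) (ps : ℕ → S × A → PMF S) :
    marginal ρ0 πs ps 0 = compProd (fun s => (ρ0 s).toReal) (πs 0) :=
  rfl

theorem marginal_succ (πs : ℕ → S → PMF A) (ps : ℕ → S × A → PMF S) (t : ℕ) :
    marginal ρ0 πs ps (t + 1) =
      compProd (pushKernel (marginal ρ0 πs ps t) (ps t)) (πs (t + 1)) := by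
  funext sa
  simp only [marginal, compProd, pushKernel, Fintype.sum_prod_type, sum_mul]

theorem marginal_nonneg (πs : ℕ → S → PMF A) (ps : ℕ → S × A → PMF S) :
    ∀ t sa, 0 ≤ marginal ρ0 πs ps t sa
  | 0 => compProd_nonneg (fun _ => ENNReal.toReal_nonneg) _
  | t + 1 => by
    rw [marginal_succ]
    exact compProd_nonneg (pushKernel_nonneg (marginal_nonneg πs ps t) _) _

theorem sum_marginal (πs : ℕ → S → PMF A) (ps : ℕ → S × A → PMF S) :
    ∀ t, ∑ sa, marginal ρ0 πs ps t sa = 1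
  | 0 => by rw [marginal_zero, sum_compProd, PMF.sum_toReal_eq_one]
  | t + 1 => by rw [marginal_succ, sum_compProd, sum_pushKernel, sum_marginal πs ps t]

variable {π1 π2 : ℕ → S → PMF A} {p1 p2 : ℕ → S × A → PMF S}

theorem tvFun_marginal_zero_le {E : ℝ} (hπ : ∀ s, tv (π1 0 s) (π2 0 s) ≤ E) :
    tvFun (marginal ρ0 π1 p1 0) (marginal ρ0 π2 p2 0) ≤ E := by
  rw [marginal_zero, marginal_zero, tvFun_compProd_kernel fun _ => ENNReal.toReal_nonneg]
  exact sum_mul_le_of_le (fun _ => ENNReal.toReal_nonneg) ρ0.sum_toReal_eq_one hπ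

theorem tvFun_marginal_succ_le {E : ℝ} (t : ℕ)
    (hπ : ∀ s, tv (π1 (t + 1) s) (π2 (t + 1) s) ≤ E) :
    tvFun (marginal ρ0 π1 p1 (t + 1)) (marginal ρ0 π2 p2 (t + 1)) ≤
      tvFun (marginal ρ0 π1 p1 t) (marginal ρ0 π2 p2 t) +
        ∑ sa, marginal ρ0 π1 p1 t sa * tv (p1 t sa) (p2 t sa) + E := by
  set d1 := marginal ρ0 π1 p1 t
  set d2 := marginal ρ0 π2 p2 t
  have hd1 : ∀ sa, 0 ≤ d1 sa := marginal_nonneg ρ0 π1 p1 t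
  have hpolicy : tvFun (compProd (pushKernel d1 (p1 t)) (π1 (t + 1)))
      (compProd (pushKernel d1 (p1 t)) (π2 (t + 1))) ≤ E := by
    rw [tvFun_compProd_kernel (pushKernel_nonneg hd1 _)]
    refine sum_mul_le_of_le (pushKernel_nonneg hd1 _) ?_ hπ
    rw [sum_pushKernel, sum_marginal]
  have hstate : tvFun (pushKernel d1 (p1 t)) (pushKernel d2 (p2 t)) ≤
      ∑ sa, d1 sa * tv (p1 t sa) (p2 t sa) + tvFun d1 d2 :=
    (tvFun_triangle _ (pushKernel d1 (p2 t)) _).trans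
      (add_le_add (tvFun_pushKernel_kernel_le hd1 _ _) (tvFun_pushKernel_le _ _ _))
  rw [marginal_succ, marginal_succ]
  calc _ ≤ _ := tvFun_triangle _ (compProd (pushKernel d1 (p1 t)) (π2 (t + 1))) _
    _ ≤ E + (∑ sa, d1 sa * tv (p1 t sa) (p2 t sa) + tvFun d1 d2) := by
        rw [tvFun_compProd]
        exact add_le_add hpolicy hstate
    _ = _ := by ring

theorem tvFun_marginal_add_le {e f : ℝ} (n : ℕ)
    (hp : ∀ i, n ≤ i → ∑ sa, marginal ρ0 π1 p1 i sa * tv (p1 i sa) (p2 i sa) ≤ e)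
    (hπ : ∀ i, n < i → ∀ s, tv (π1 i s) (π2 i s) ≤ f) :
    ∀ j : ℕ, tvFun (marginal ρ0 π1 p1 (n + j)) (marginal ρ0 π2 p2 (n + j)) ≤
      tvFun (marginal ρ0 π1 p1 n) (marginal ρ0 π2 p2 n) + j * (e + f)
  | 0 => by simp
  | j + 1 => by
    have hstep := tvFun_marginal_succ_le ρ0 (p1 := p1) (p2 := p2) (n + j) (hπ _ (by omega))
    have hj := tvFun_marginal_add_le n hp hπ j
    have hpj := hp (n + j) (by omega)
    push_cast
    rw [← add_assoc]
    linarith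

theorem tvFun_marginal_le {e f : ℝ}
    (hp : ∀ i, ∑ sa, marginal ρ0 π1 p1 i sa * tv (p1 i sa) (p2 i sa) ≤ e)
    (hπ : ∀ i s, tv (π1 i s) (π2 i s) ≤ f) (t : ℕ) :
    tvFun (marginal ρ0 π1 p1 t) (marginal ρ0 π2 p2 t) ≤ f + t * (e + f) := by
  have h := tvFun_marginal_add_le ρ0 0 (fun i _ => hp i) (fun i _ => hπ i) t
  rw [zero_add] at h
  linarith [tvFun_marginal_zero_le ρ0 (p1 := p1) (p2 := p2) (hπ 0)]

end Marginal

theorem hasSum_natSub_mul_geometric {γ : ℝ} (hγ0 : 0 ≤ γ) (hγ1 : γ < 1) (k : ℕ) :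
    HasSum (fun t : ℕ => ((t - k : ℕ) : ℝ) * γ ^ t) (γ ^ (k + 1) / (1 - γ) ^ 2) := by
  have hγ : ‖γ‖ < 1 := by rwa [Real.norm_of_nonneg hγ0]
  have hshift : (fun t : ℕ => ((t + k - k : ℕ) : ℝ) * γ ^ (t + k)) =
      fun t : ℕ => γ ^ k * (t * γ ^ t) := by
    funext t
    rw [Nat.add_sub_cancel, pow_add]
    ring
  rw [← hasSum_nat_add_iff' k, hshift,
    sum_eq_zero fun i hi => by simp [Nat.sub_eq_zero_of_le (mem_range.mp hi).le], sub_zero,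
    pow_succ, mul_div_assoc]
  exact (hasSum_coe_mul_geometric_of_norm_lt_one hγ).mul_left (γ ^ k)

section Return

variable {S A : Type*} [Fintype S] [Fintype A] {ρ0 : PMF S} {γ rmax : ℝ} {r : S × A → ℝ}

theorem summable_discounted_marginal (hγ0 : 0 ≤ γ) (hγ1 : γ < 1) (hr : ∀ sa, |r sa| ≤ rmax)
    (πs : ℕ → S → PMF A) (ps : ℕ → S × A → PMF S) :
    Summable fun t => γ ^ t * ∑ sa, marginal ρ0 πs ps t sa * r sa := by
  refine .of_norm_bounded ((summable_geometric_of_lt_one hγ0 hγ1).mul_left rmax) fun t => ?_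
  rw [norm_mul, norm_pow, Real.norm_of_nonneg hγ0, mul_comm]
  gcongr
  have hd := marginal_nonneg ρ0 πs ps t
  calc |∑ sa, marginal ρ0 πs ps t sa * r sa| ≤ ∑ sa, marginal ρ0 πs ps t sa * |r sa| := by
        refine (abs_sum_le_sum_abs _ _).trans_eq (sum_congr rfl fun sa _ => ?_)
        rw [abs_mul, abs_of_nonneg (hd sa)]
    _ ≤ rmax := sum_mul_le_of_le hd (sum_marginal ρ0 πs ps t) hr

theorem ret_sub_ret_le (hγ0 : 0 ≤ γ) (hγ1 : γ < 1) (hrmax : 0 ≤ rmax) (hr : ∀ sa, |r sa| ≤ rmax)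
    {π1 π2 : ℕ → S → PMF A} {p1 p2 : ℕ → S × A → PMF S} {b : ℕ → ℝ} {B : ℝ}
    (hb : ∀ t, tvFun (marginal ρ0 π1 p1 t) (marginal ρ0 π2 p2 t) ≤ b t)
    (hB : HasSum (fun t => γ ^ t * b t) B) :
    ret γ r (marginal ρ0 π1 p1) - ret γ r (marginal ρ0 π2 p2) ≤ 2 * rmax * B := by
  refine hasSum_le (fun t => ?_) ((summable_discounted_marginal hγ0 hγ1 hr π1 p1).hasSum.sub
    (summable_discounted_marginal hγ0 hγ1 hr π2 p2).hasSum) (hB.mul_left (2 * rmax))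
  rw [← mul_sub, mul_left_comm]
  gcongr
  calc _ ≤ 2 * rmax * tvFun (marginal ρ0 π1 p1 t) (marginal ρ0 π2 p2 t) :=
        (le_abs_self _).trans (abs_sum_mul_sub_sum_mul_le hr _ _)
    _ ≤ 2 * rmax * b t := by gcongr; exact hb t

end Return

section Branched

variable {S A : Type*} [Fintype S] [Fintype A] {p phat : S × A → PMF S} {πD π : S → PMF A}
  {ρ0 : PMF S} {k : ℕ} {εm επ : ℝ}

theorem tvFun_branched_marginal_le_of_le
    (hεm : ∀ t, ∑ sa, marginal ρ0 (fun _ => πD) (fun _ => p) t sa * tv (p sa) (phat sa) ≤ εm)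
    (hεπ : ∀ s, tv (πD s) (π s) ≤ επ) (hεπ0 : 0 ≤ επ) {t : ℕ} (ht : t ≤ k) :
    tvFun (marginal ρ0 (fun t => if t < k then π else πD) (fun t => if t < k then phat else p) t)
      (marginal ρ0 (fun _ => π) (fun _ => p) t) ≤ 2 * επ + k * (εm + 2 * επ) := by
  set dπ := marginal ρ0 (fun _ => π) (fun _ => p)
  set dD := marginal ρ0 (fun _ => πD) (fun _ => p)
  set db := marginal ρ0 (fun t => if t < k then π else πD) (fun t => if t < k then phat else p)
  have hεm0 : 0 ≤ εm := (sum_nonneg fun sa _ =>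
    mul_nonneg (marginal_nonneg _ _ _ _ _) (tv_nonneg _ _)).trans (hεm 0)
  have hDπ : tvFun (dD t) (dπ t) ≤ επ + t * (0 + επ) :=
    tvFun_marginal_le ρ0 (fun _ => by simp [tv_self]) (fun _ => hεπ) t
  have hDb : tvFun (dD t) (db t) ≤ επ + t * (εm + επ) := by
    refine tvFun_marginal_le ρ0 (fun i => ?_) (fun i s => ?_) t
    · split_ifs
      · exact hεm i
      · simpa [tv_self] using hεm0
    · split_ifs
      · exact hεπ s
      · simpa [tv_self] using hεπ0
  have htk : (t : ℝ) * (εm + 2 * επ) ≤ k * (εm + 2 * επ) :=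
    mul_le_mul_of_nonneg_right (by exact_mod_cast ht) (by linarith)
  linarith [tvFun_triangle (db t) (dD t) (dπ t), tvFun_comm (db t) (dD t)]

theorem tvFun_branched_marginal_le
    (hεm : ∀ t, ∑ sa, marginal ρ0 (fun _ => πD) (fun _ => p) t sa * tv (p sa) (phat sa) ≤ εm)
    (hεπ : ∀ s, tv (πD s) (π s) ≤ επ) (hεπ0 : 0 ≤ επ) (t : ℕ) :
    tvFun (marginal ρ0 (fun t => if t < k then π else πD) (fun t => if t < k then phat else p) t)
      (marginal ρ0 (fun _ => π) (fun _ => p) t) ≤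
        2 * επ + k * (εm + 2 * επ) + ((t - k : ℕ) : ℝ) * επ := by
  rcases le_or_gt t k with ht | ht
  · simpa [Nat.sub_eq_zero_of_le ht] using tvFun_branched_marginal_le_of_le hεm hεπ hεπ0 ht
  obtain ⟨j, rfl⟩ := Nat.exists_eq_add_of_le ht.le
  -- From time `k` on both processes run the true dynamics, so only the policies differ.
  have hafter := tvFun_marginal_add_le ρ0 k (e := 0) (f := επ)
    (π1 := fun t => if t < k then π else πD) (π2 := fun _ => π)
    (p1 := fun t => if t < k then phat else p) (p2 := fun _ => p)
    (fun i hi => by simp [Nat.not_lt.mpr hi, tv_self])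
    (fun i hi s => by simpa [Nat.not_lt.mpr hi.le] using hεπ s) j
  have hk := tvFun_branched_marginal_le_of_le hεm hεπ hεπ0 (le_refl k)
  rw [Nat.add_sub_cancel_left]
  linarith

end Branched

theorem mbpo_branched_bound_general
    {S A : Type*} [Fintype S] [Fintype A] [Nonempty S]
    (p phat : S × A → PMF S) (πD π : S → PMF A) (ρ0 : PMF S)
    (r : S × A → ℝ) (rmax : ℝ) (hrmax : 0 ≤ rmax) (hr : ∀ sa : S × A, |r sa| ≤ rmax)
    (γ : ℝ) (hγ0 : 0 < γ) (hγ1 : γ < 1) (k : ℕ) (εm επ : ℝ)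
    (hεm : ∀ t : ℕ, ∑ sa : S × A,
      marginal ρ0 (fun _ => πD) (fun _ => p) t sa * tv (p sa) (phat sa) ≤ εm)
    (hεπ : ∀ s : S, tv (πD s) (π s) ≤ επ) :
    ret γ r (marginal ρ0 (fun _ => π) (fun _ => p)) ≥
      ret γ r (marginal ρ0
          (fun t => if t < k then π else πD) (fun t => if t < k then phat else p)) -
        2 * rmax * (γ ^ (k + 1) * επ / (1 - γ) ^ 2 + (γ ^ k + 2) * επ / (1 - γ) +
          (k : ℝ) * (εm + 2 * επ) / (1 - γ)) := by
  have hεπ0 : 0 ≤ επ := (tv_nonneg _ _).trans (hεπ (Classical.arbitrary S))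
  set c : ℝ := 2 * επ + k * (εm + 2 * επ) with hc
  have hsum : HasSum (fun t : ℕ => γ ^ t * (c + ((t - k : ℕ) : ℝ) * επ))
      (c * (1 - γ)⁻¹ + επ * (γ ^ (k + 1) / (1 - γ) ^ 2)) := by
    have hsplit : (fun t : ℕ => γ ^ t * (c + ((t - k : ℕ) : ℝ) * επ)) =
        fun t : ℕ => c * γ ^ t + επ * (((t - k : ℕ) : ℝ) * γ ^ t) :=
      funext fun t => by ring
    rw [hsplit]
    exact ((hasSum_geometric_of_lt_one hγ0.le hγ1).mul_left c).add
      ((hasSum_natSub_mul_geometric hγ0.le hγ1 k).mul_left επ)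
  have hret := ret_sub_ret_le hγ0.le hγ1 hrmax hr (tvFun_branched_marginal_le hεm hεπ hεπ0) hsum
  have h1γ : 0 < 1 - γ := by linarith
  have hslack : c * (1 - γ)⁻¹ + επ * (γ ^ (k + 1) / (1 - γ) ^ 2) ≤
      γ ^ (k + 1) * επ / (1 - γ) ^ 2 + (γ ^ k + 2) * επ / (1 - γ) +
        (k : ℝ) * (εm + 2 * επ) / (1 - γ) :=
    calc _ = γ ^ (k + 1) * επ / (1 - γ) ^ 2 + (0 + 2) * επ / (1 - γ) +
          (k : ℝ) * (εm + 2 * επ) / (1 - γ) := by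
          rw [hc]
          field_simp
          ring
      _ ≤ _ := by gcongr; positivity
  linarith [mul_le_mul_of_nonneg_left hslack (by linarith : (0 : ℝ) ≤ 2 * rmax)]

/-- Branched rollout bound with model error under the data-collecting policy
(Theorem 4.2 / Theorem A.3). -/
theorem mbpo_branched_bound
    {S A : Type*} [Fintype S] [Fintype A] [Nonempty S] [Nonempty A]
    (p phat : S × A → PMF S) (πD π : S → PMF A) (ρ0 : PMF S)
    (r : S × A → ℝ) (rmax : ℝ) (hrmax : 0 ≤ rmax) (hr : ∀ sa : S × A, |r sa| ≤ rmax)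
    (γ : ℝ) (hγ0 : 0 < γ) (hγ1 : γ < 1) (k : ℕ) (εm επ : ℝ)
    (hεm : ∀ t : ℕ, ∑ sa : S × A,
      marginal ρ0 (fun _ => πD) (fun _ => p) t sa * tv (p sa) (phat sa) ≤ εm)
    (hεπ : ∀ s : S, tv (πD s) (π s) ≤ επ) :
    ret γ r (marginal ρ0 (fun _ => π) (fun _ => p)) ≥
      ret γ r (marginal ρ0
          (fun t => if t < k then π else πD) (fun t => if t < k then phat else p)) -
        2 * rmax * (γ ^ (k + 1) * επ / (1 - γ) ^ 2 + (γ ^ k + 2) * επ / (1 - γ) +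
          (k : ℝ) * (εm + 2 * επ) / (1 - γ)) :=
  mbpo_branched_bound_general p phat πD π ρ0 r rmax hrmax hr γ hγ0 hγ1 k εm επ hεm hεπ
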